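/- arXiv:2503.08214 — 4 statements merged into one kernel-verified Lean document; each statement's English description precedes it below -/
import Mathlib

section
/- Let h : ℝⁿ → ℝ be continuously differentiable and x : [0,∞) → ℝⁿ a C¹ trajectory satisfying d/dt h(x(t)) ≥ -α·h(x(t)) - γ for constants α > 0 and γ ≥ 0. If h(x(0)) ≥ -γ/α, then h(x(t)) ≥ -γ/α for all t ≥ 0, i.e., the inflated set S_δ = {x | h(x) + γ/α ≥ 0} is forward invariant. -/
/-! Shifting by `γ / α` turns the barrier inequality into `ψ' ≥ -α ψ` for `ψ = h ∘ x + γ / α`.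
Then `ψ t * exp (α t)` is nondecreasing, so `ψ` keeps the sign of `ψ 0`. -/

open Real Set

theorem monotoneOn_mul_exp_of_neg_mul_le_deriv {f : ℝ → ℝ} {a : ℝ} {D : Set ℝ}
    (hD : Convex ℝ D) (hf : Differentiable ℝ f)
    (hderiv : ∀ t ∈ interior D, -a * f t ≤ deriv f t) :
    MonotoneOn (fun t => f t * exp (a * t)) D := by
  have hexp (t : ℝ) : HasDerivAt (fun s => exp (a * s)) (exp (a * t) * a) t := by
    simpa using ((hasDerivAt_id t).const_mul a).exp
  have hprod (t : ℝ) : HasDerivAt (fun s => f s * exp (a * s))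
      ((deriv f t + a * f t) * exp (a * t)) t :=
    ((hf t).hasDerivAt.mul (hexp t)).congr_deriv (by ring)
  refine monotoneOn_of_deriv_nonneg hD ?_ ?_ ?_
  · exact fun t _ => (hprod t).continuousAt.continuousWithinAt
  · exact fun t _ => (hprod t).differentiableAt.differentiableWithinAt
  · intro t ht
    rw [(hprod t).deriv]
    exact mul_nonneg (by linarith [hderiv t ht]) (exp_pos _).le

theorem nonneg_of_neg_mul_le_deriv {f : ℝ → ℝ} {a : ℝ} (hf : Differentiable ℝ f)
    (hderiv : ∀ t, 0 ≤ t → -a * f t ≤ deriv f t) (h0 : 0 ≤ f 0) {t : ℝ} (ht : 0 ≤ t) :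
    0 ≤ f t := by
  have hmono := monotoneOn_mul_exp_of_neg_mul_le_deriv (convex_Ici 0) hf
    (fun s hs => hderiv s (interior_subset hs))
  have : f 0 * exp (a * 0) ≤ f t * exp (a * t) := hmono self_mem_Ici ht ht
  rw [mul_zero, exp_zero, mul_one] at this
  exact nonneg_of_mul_nonneg_left (h0.trans this) (exp_pos _)

theorem stmt_1_general {n : ℕ} (h : EuclideanSpace ℝ (Fin n) → ℝ) (hh : ContDiff ℝ 1 h)
    (x : ℝ → EuclideanSpace ℝ (Fin n)) (hx : ContDiff ℝ 1 x)
    (α γ : ℝ) (hα : 0 < α)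
    (hineq : ∀ t : ℝ, 0 ≤ t → -α * h (x t) - γ ≤ deriv (fun s => h (x s)) t)
    (h0 : -(γ / α) ≤ h (x 0)) :
    ∀ t : ℝ, 0 ≤ t → -(γ / α) ≤ h (x t) := by
  intro t ht
  have hdiff : Differentiable ℝ (fun s => h (x s) + γ / α) :=
    ((hh.comp hx).differentiable one_ne_zero).add_const _
  have hshift : ∀ s, 0 ≤ s →
      -α * (h (x s) + γ / α) ≤ deriv (fun s => h (x s) + γ / α) s := by
    intro s hs
    rw [deriv_add_const, neg_mul, mul_add, mul_div_cancel₀ γ hα.ne']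
    linarith [hineq s hs]
  have hψ := nonneg_of_neg_mul_le_deriv hdiff hshift (by linarith) ht
  linarith

theorem stmt_1 {n : ℕ} (h : EuclideanSpace ℝ (Fin n) → ℝ) (hh : ContDiff ℝ 1 h)
    (x : ℝ → EuclideanSpace ℝ (Fin n)) (hx : ContDiff ℝ 1 x)
    (α γ : ℝ) (hα : 0 < α) (hγ : 0 ≤ γ)
    (hineq : ∀ t : ℝ, 0 ≤ t → -α * h (x t) - γ ≤ deriv (fun s => h (x s)) t)
    (h0 : -(γ / α) ≤ h (x 0)) :
    ∀ t : ℝ, 0 ≤ t → -(γ / α) ≤ h (x t) :=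
  stmt_1_general h hh x hx α γ hα hineq h0
end

section
/- Let P₁, …, P_k ∈ ℝ³ and r₁, …, r_k > 0, and define S_n = {x ∈ ℝ³ | ‖x - P_n‖ ≥ r_n} and S* = ⋂ₙ S_n. If a C¹ trajectory x(t) (with x(t) ≠ P_n for all t, n) satisfies ⟨(x(t) - P_n)/‖x(t) - P_n‖, ẋ(t)⟩ ≥ -α·(‖x(t) - P_n‖ - r_n) for every n and every t, and x(0) ∈ S*, then x(t) ∈ S* for all t ≥ 0. -/
/-!
Fix an obstacle `n` and put `N(t) = ‖x(t) - Pₙ‖`. Away from `Pₙ` the norm is differentiable with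
`N' = ⟪(x - Pₙ)/‖x - Pₙ‖, ẋ⟫`, so the hypothesis is the barrier inequality `N' ≥ -α (N - rₙ)`.
Then `e^{αt} (N(t) - rₙ)` has nonnegative derivative, hence stays `≥ N(0) - rₙ ≥ 0`.
-/

open scoped RealInnerProductSpace
open Set

theorem HasDerivAt.norm {F : Type*} [NormedAddCommGroup F] [InnerProductSpace ℝ F]
    {f : ℝ → F} {f' : F} {t : ℝ} (hf : HasDerivAt f f' t) (h0 : f t ≠ 0) :
    HasDerivAt (‖f ·‖) ⟪‖f t‖⁻¹ • f t, f'⟫ t := by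
  have hpos : 0 < ‖f t‖ := norm_pos_iff.2 h0
  have hsqrt := hf.norm_sq.sqrt (pow_pos hpos 2).ne'
  simp only [Real.sqrt_sq (norm_nonneg _)] at hsqrt
  convert hsqrt using 1
  rw [real_inner_smul_left]
  field_simp

theorem monotoneOn_exp_mul_mul_sub_of_neg_mul_sub_le_deriv {f f' : ℝ → ℝ} {α c : ℝ}
    (hcont : ContinuousOn f (Ici 0)) (hf : ∀ s, 0 < s → HasDerivAt f (f' s) s)
    (hbarrier : ∀ s, 0 < s → -α * (f s - c) ≤ f' s) :
    MonotoneOn (fun s => Real.exp (α * s) * (f s - c)) (Ici 0) := by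
  have hexp : ∀ s, HasDerivAt (fun s => Real.exp (α * s)) (Real.exp (α * s) * α) s := fun s =>
    ((hasDerivAt_id s).const_mul α).exp.congr_deriv (by simp [mul_comm])
  refine monotoneOn_of_hasDerivWithinAt_nonneg (convex_Ici 0)
    (f' := fun s => Real.exp (α * s) * α * (f s - c) + Real.exp (α * s) * f' s)
    (((Real.continuous_exp.comp (continuous_const_mul α)).continuousOn).mul
      (hcont.sub continuousOn_const)) (fun s hs => ?_) (fun s hs => ?_)
  · rw [interior_Ici] at hs
    exact ((hexp s).mul ((hf s hs).sub_const c)).hasDerivWithinAt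
  · rw [interior_Ici] at hs
    have := hbarrier s hs
    have := Real.exp_pos (α * s)
    nlinarith

theorem le_of_neg_mul_sub_le_deriv {f f' : ℝ → ℝ} {α c : ℝ}
    (hcont : ContinuousOn f (Ici 0)) (hf : ∀ s, 0 < s → HasDerivAt f (f' s) s)
    (hbarrier : ∀ s, 0 < s → -α * (f s - c) ≤ f' s) (h0 : c ≤ f 0) {t : ℝ} (ht : 0 ≤ t) :
    c ≤ f t := by
  have hmono := monotoneOn_exp_mul_mul_sub_of_neg_mul_sub_le_deriv hcont hf hbarrier
    self_mem_Ici (mem_Ici.2 ht) ht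
  simp only [mul_zero, Real.exp_zero, one_mul] at hmono
  have := Real.exp_pos (α * t)
  nlinarith

theorem stmt_7_general (k : ℕ) (P : Fin k → EuclideanSpace ℝ (Fin 3)) (r : Fin k → ℝ)
    (α : ℝ)
    (x : ℝ → EuclideanSpace ℝ (Fin 3)) (x' : ℝ → EuclideanSpace ℝ (Fin 3))
    (hx : ∀ t : ℝ, HasDerivAt x (x' t) t)
    (hne : ∀ t : ℝ, ∀ n, x t ≠ P n)
    (hineq : ∀ t : ℝ, 0 ≤ t → ∀ n,
      -α * (‖x t - P n‖ - r n) ≤ ⟪(‖x t - P n‖⁻¹ • (x t - P n)), x' t⟫)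
    (h0 : x 0 ∈ ⋂ n, {y : EuclideanSpace ℝ (Fin 3) | r n ≤ ‖y - P n‖}) :
    ∀ t : ℝ, 0 ≤ t → x t ∈ ⋂ n, {y : EuclideanSpace ℝ (Fin 3) | r n ≤ ‖y - P n‖} := by
  intro t ht
  simp only [mem_iInter, mem_ofPred_eq] at h0 ⊢
  intro n
  have hdist : ∀ s, HasDerivAt (‖x · - P n‖) ⟪‖x s - P n‖⁻¹ • (x s - P n), x' s⟫ s :=
    fun s => ((hx s).sub_const (P n)).norm (sub_ne_zero.2 (hne s n))
  exact le_of_neg_mul_sub_le_deriv (fun s _ => (hdist s).continuousAt.continuousWithinAt)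
    (fun s _ => hdist s) (fun s hs => hineq s hs.le n) (h0 n) ht

theorem stmt_7 (k : ℕ) (P : Fin k → EuclideanSpace ℝ (Fin 3)) (r : Fin k → ℝ)
    (hr : ∀ n, 0 < r n) (α : ℝ) (hα : 0 < α)
    (x : ℝ → EuclideanSpace ℝ (Fin 3)) (x' : ℝ → EuclideanSpace ℝ (Fin 3))
    (hx : ∀ t : ℝ, HasDerivAt x (x' t) t) (hx' : Continuous x')
    (hne : ∀ t : ℝ, ∀ n, x t ≠ P n)
    (hineq : ∀ t : ℝ, 0 ≤ t → ∀ n,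
      -α * (‖x t - P n‖ - r n) ≤ ⟪(‖x t - P n‖⁻¹ • (x t - P n)), x' t⟫)
    (h0 : x 0 ∈ ⋂ n, {y : EuclideanSpace ℝ (Fin 3) | r n ≤ ‖y - P n‖}) :
    ∀ t : ℝ, 0 ≤ t → x t ∈ ⋂ n, {y : EuclideanSpace ℝ (Fin 3) | r n ≤ ‖y - P n‖} :=
  stmt_7_general k P r α x x' hx hne hineq h0
end

section
/- Let h_q : ℝⁿ → ℝ be C¹ with ‖∇h_q(q)‖ ≤ C_h for all q, and suppose a trajectory q(t) has velocity q̇(t) = q̇_s(t) + ė(t) where the safe velocity satisfies ⟨∇h_q(q(t)), q̇_s(t)⟩ ≥ -α·h_q(q(t)) and the tracking error satisfies ‖ė(t)‖ ≤ (V(t))/k₁ with V(t) ≤ V(0)e^{-λt} and λ > α. If h_q(q(0)) ≥ V(0)/(α_e) where α_e = k₁(λ - α)/C_h, then h_q(q(t)) ≥ 0 for all t ≥ 0. -/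
/-!
Along the trajectory, `H t = h_q (q t)` satisfies
`H' = ⟪∇h_q, q̇_s⟫ + ⟪∇h_q, ė⟫ ≥ -α H - C_h ‖ė‖ ≥ -α H - (C_h V(0) / k₁) e^{-λt}`.
With `C = C_h V(0) / (k₁ (λ - α))`, the function `C e^{-λt}` solves this inequality with equality,
so `e^{αt} (H t - C e^{-λt})` is nondecreasing. The initial condition says exactly that it starts
nonnegative, hence `H t ≥ C e^{-λt} ≥ 0`.
-/

open scoped RealInnerProductSpace
open Real Set

theorem HasGradientAt.comp_hasDerivAt {F : Type*} [NormedAddCommGroup F] [InnerProductSpace ℝ F]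
    [CompleteSpace F] {f : F → ℝ} {f' : F} {γ : ℝ → F} {v : F} {t : ℝ}
    (hf : HasGradientAt f f' (γ t)) (hγ : HasDerivAt γ v t) :
    HasDerivAt (f ∘ γ) ⟪f', v⟫ t := by
  simpa using hf.hasFDerivAt.comp_hasDerivAt t hγ

theorem neg_mul_le_real_inner {F : Type*} [NormedAddCommGroup F] [InnerProductSpace ℝ F]
    {x y : F} {a b : ℝ} (hx : ‖x‖ ≤ a) (hy : ‖y‖ ≤ b) : -(a * b) ≤ ⟪x, y⟫ := by
  have hxy : ‖x‖ * ‖y‖ ≤ a * b := mul_le_mul hx hy (norm_nonneg _) ((norm_nonneg _).trans hx)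
  linarith [neg_le_of_abs_le (abs_real_inner_le_norm x y)]

section Comparison

variable {H H' : ℝ → ℝ} {α lam C : ℝ}

theorem monotoneOn_exp_mul_sub_of_hasDerivAt (hH : ∀ t, HasDerivAt H (H' t) t)
    (hH' : ∀ t, 0 < t → -α * H t - C * (lam - α) * exp (-lam * t) ≤ H' t) :
    MonotoneOn (fun t => exp (α * t) * (H t - C * exp (-lam * t))) (Ici 0) := by
  have hexp : ∀ c t, HasDerivAt (fun t => exp (c * t)) (c * exp (c * t)) t := fun c t => by
    simpa [mul_comm] using ((hasDerivAt_id t).const_mul c).exp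
  have hG : ∀ t, HasDerivAt (fun t => exp (α * t) * (H t - C * exp (-lam * t)))
      (exp (α * t) * (α * (H t - C * exp (-lam * t)) + (H' t + C * lam * exp (-lam * t)))) t :=
    fun t => ((hexp α t).fun_mul ((hH t).fun_sub ((hexp (-lam) t).const_mul C))).congr_deriv
      (by ring)
  refine monotoneOn_of_hasDerivWithinAt_nonneg (convex_Ici 0)
    (fun t _ => (hG t).continuousAt.continuousWithinAt) (fun t _ => (hG t).hasDerivWithinAt) ?_
  intro t ht
  rw [interior_Ici] at ht
  have : 0 ≤ α * (H t - C * exp (-lam * t)) + (H' t + C * lam * exp (-lam * t)) := by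
    linarith [hH' t ht]
  positivity

theorem mul_exp_le_of_hasDerivAt (hH : ∀ t, HasDerivAt H (H' t) t)
    (hH' : ∀ t, 0 < t → -α * H t - C * (lam - α) * exp (-lam * t) ≤ H' t)
    (h0 : C ≤ H 0) {t : ℝ} (ht : 0 ≤ t) : C * exp (-lam * t) ≤ H t := by
  have hmono := monotoneOn_exp_mul_sub_of_hasDerivAt hH hH' self_mem_Ici ht ht
  simp only [mul_zero, exp_zero, one_mul] at hmono
  have : 0 ≤ exp (α * t) * (H t - C * exp (-lam * t)) := by linarith
  linarith [nonneg_of_mul_nonneg_right this (exp_pos _)]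

end Comparison

theorem stmt_12_general {n : ℕ} (hq : EuclideanSpace ℝ (Fin n) → ℝ) (hhq : ContDiff ℝ 1 hq)
    (C_h k₁ lam α : ℝ) (hCh : 0 < C_h) (hk₁ : 0 < k₁) (hlam : α < lam)
    (hgrad : ∀ y : EuclideanSpace ℝ (Fin n), ‖gradient hq y‖ ≤ C_h)
    (q qs e : ℝ → EuclideanSpace ℝ (Fin n))
    (hq' : ∀ t : ℝ, HasDerivAt q (qs t + e t) t)
    (hsafe : ∀ t : ℝ, 0 ≤ t → -α * hq (q t) ≤ ⟪gradient hq (q t), qs t⟫)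
    (V : ℝ → ℝ)
    (herr : ∀ t : ℝ, 0 ≤ t → ‖e t‖ ≤ V t / k₁)
    (hVdecay : ∀ t : ℝ, 0 ≤ t → V t ≤ V 0 * Real.exp (-lam * t))
    (h0 : V 0 / (k₁ * (lam - α) / C_h) ≤ hq (q 0)) :
    ∀ t : ℝ, 0 ≤ t → 0 ≤ hq (q t) := by
  set C := V 0 / (k₁ * (lam - α) / C_h)
  have hV0 : 0 ≤ V 0 := by
    have := (norm_nonneg _).trans (herr 0 le_rfl)
    rwa [le_div_iff₀ hk₁, zero_mul] at this
  have hC : 0 ≤ C := div_nonneg hV0 (div_nonneg (mul_nonneg hk₁.le (by linarith)) hCh.le)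
  have hrate : C * (lam - α) = C_h * (V 0 / k₁) := by
    simp only [C]
    field_simp [(sub_pos.2 hlam).ne']
  have hderiv : ∀ t, HasDerivAt (hq ∘ q) ⟪gradient hq (q t), qs t + e t⟫ t := fun t =>
    ((hhq.differentiable one_ne_zero) (q t)).hasGradientAt.comp_hasDerivAt (hq' t)
  have hbarrier : ∀ t, 0 < t → -α * hq (q t) - C * (lam - α) * exp (-lam * t) ≤
      ⟪gradient hq (q t), qs t + e t⟫ := by
    intro t ht
    have herr_decay : ‖e t‖ ≤ V 0 / k₁ * exp (-lam * t) :=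
      calc ‖e t‖ ≤ V t / k₁ := herr t ht.le
        _ ≤ V 0 * exp (-lam * t) / k₁ := by gcongr; exact hVdecay t ht.le
        _ = V 0 / k₁ * exp (-lam * t) := by ring
    rw [inner_add_right, hrate]
    linarith [hsafe t ht.le, neg_mul_le_real_inner (hgrad (q t)) herr_decay]
  intro t ht
  exact (mul_nonneg hC (exp_pos _).le).trans (mul_exp_le_of_hasDerivAt hderiv hbarrier h0 ht)

theorem stmt_12 {n : ℕ} (hq : EuclideanSpace ℝ (Fin n) → ℝ) (hhq : ContDiff ℝ 1 hq)
    (C_h k₁ lam α : ℝ) (hCh : 0 < C_h) (hk₁ : 0 < k₁) (hα : 0 < α) (hlam : α < lam)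
    (hgrad : ∀ y : EuclideanSpace ℝ (Fin n), ‖gradient hq y‖ ≤ C_h)
    (q qs e : ℝ → EuclideanSpace ℝ (Fin n))
    (hq' : ∀ t : ℝ, HasDerivAt q (qs t + e t) t)
    (hsafe : ∀ t : ℝ, 0 ≤ t → -α * hq (q t) ≤ ⟪gradient hq (q t), qs t⟫)
    (V : ℝ → ℝ) (hVnn : ∀ t : ℝ, 0 ≤ t → 0 ≤ V t)
    (herr : ∀ t : ℝ, 0 ≤ t → ‖e t‖ ≤ V t / k₁)
    (hVdecay : ∀ t : ℝ, 0 ≤ t → V t ≤ V 0 * Real.exp (-lam * t))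
    (h0 : V 0 / (k₁ * (lam - α) / C_h) ≤ hq (q 0)) :
    ∀ t : ℝ, 0 ≤ t → 0 ≤ hq (q t) :=
  stmt_12_general hq hhq C_h k₁ lam α hCh hk₁ hlam hgrad q qs e hq' hsafe V herr hVdecay h0
end

section
/- Let P ∈ ℝ³ and 0 < r_in < r_out. Define h_in(x) = ‖x - P‖ - r_in and h_out(x) = r_out - ‖x - P‖, and the annular safe set A = {x | h_in(x) ≥ 0 and h_out(x) ≥ 0}. If a C¹ trajectory x(t) with x(t) ≠ P satisfies ⟨(x(t)-P)/‖x(t)-P‖, ẋ(t)⟩ ≥ -α·h_in(x(t)) and -⟨(x(t)-P)/‖x(t)-P‖, ẋ(t)⟩ ≥ -α·h_out(x(t)) for all t, and x(0) ∈ A, then x(t) ∈ A for all t ≥ 0. -/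
open scoped RealInnerProductSpace

theorem HasDerivAt.norm_of_ne_zero {F : Type*} [NormedAddCommGroup F] [InnerProductSpace ℝ F]
    {f : ℝ → F} {f' : F} {t : ℝ} (hf : HasDerivAt f f' t) (h0 : f t ≠ 0) :
    HasDerivAt (fun s => ‖f s‖) ⟪‖f t‖⁻¹ • f t, f'⟫ t := by
  have hsq : ‖f t‖ ^ 2 ≠ 0 := pow_ne_zero 2 (norm_ne_zero_iff.2 h0)
  convert hf.norm_sq.sqrt hsq using 1
  · simp only [Real.sqrt_sq (norm_nonneg _)]
  · rw [Real.sqrt_sq (norm_nonneg _), real_inner_smul_left]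
    field_simp

/-- The barrier condition `h' ≥ -α h` makes `exp (α t) * h t` nondecreasing. -/
theorem nonneg_of_hasDerivAt_of_neg_mul_le {h h' : ℝ → ℝ} {α : ℝ}
    (hd : ∀ t, 0 ≤ t → HasDerivAt h (h' t) t) (hb : ∀ t, 0 ≤ t → -α * h t ≤ h' t)
    (h0 : 0 ≤ h 0) {t : ℝ} (ht : 0 ≤ t) : 0 ≤ h t := by
  set u : ℝ → ℝ := fun s => Real.exp (α * s) * h s
  have hu : ∀ s, 0 ≤ s →
      HasDerivAt u (α * Real.exp (α * s) * h s + Real.exp (α * s) * h' s) s := fun s hs => by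
    refine HasDerivAt.mul ?_ (hd s hs)
    simpa [mul_comm] using ((hasDerivAt_id s).const_mul α).exp
  have hmono : MonotoneOn u (Set.Ici 0) := by
    refine monotoneOn_of_hasDerivWithinAt_nonneg (convex_Ici 0)
      (fun s hs => (hu s hs).continuousAt.continuousWithinAt)
      (fun s hs => (hu s (interior_subset hs)).hasDerivWithinAt) fun s hs => ?_
    have hs : 0 ≤ s := (interior_subset hs : s ∈ Set.Ici 0)
    nlinarith [Real.exp_pos (α * s), hb s hs]
  have hut : 0 ≤ Real.exp (α * t) * h t := by
    have hu0t := hmono Set.self_mem_Ici ht ht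
    simp only [u, mul_zero, Real.exp_zero, one_mul] at hu0t
    exact h0.trans hu0t
  exact (mul_nonneg_iff_of_pos_left (Real.exp_pos _)).1 hut

theorem stmt_15_general (P : EuclideanSpace ℝ (Fin 3)) (r_in r_out α : ℝ)
    (x : ℝ → EuclideanSpace ℝ (Fin 3)) (x' : ℝ → EuclideanSpace ℝ (Fin 3))
    (hx : ∀ t : ℝ, HasDerivAt x (x' t) t)
    (hne : ∀ t : ℝ, x t ≠ P)
    (hin : ∀ t : ℝ, 0 ≤ t →
      -α * (‖x t - P‖ - r_in) ≤ ⟪(‖x t - P‖⁻¹ • (x t - P)), x' t⟫)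
    (hout : ∀ t : ℝ, 0 ≤ t →
      -α * (r_out - ‖x t - P‖) ≤ -⟪(‖x t - P‖⁻¹ • (x t - P)), x' t⟫)
    (h0 : r_in ≤ ‖x 0 - P‖ ∧ ‖x 0 - P‖ ≤ r_out) :
    ∀ t : ℝ, 0 ≤ t → r_in ≤ ‖x t - P‖ ∧ ‖x t - P‖ ≤ r_out := by
  intro t ht
  have hdist : ∀ s, HasDerivAt (fun s => ‖x s - P‖) ⟪‖x s - P‖⁻¹ • (x s - P), x' s⟫ s :=
    fun s => ((hx s).sub_const P).norm_of_ne_zero (sub_ne_zero.2 (hne s))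
  have h_in := nonneg_of_hasDerivAt_of_neg_mul_le (fun s _ => (hdist s).sub_const r_in) hin
    (sub_nonneg.2 h0.1) ht
  have h_out := nonneg_of_hasDerivAt_of_neg_mul_le (fun s _ => (hdist s).const_sub r_out) hout
    (sub_nonneg.2 h0.2) ht
  exact ⟨sub_nonneg.1 h_in, sub_nonneg.1 h_out⟩

theorem stmt_15 (P : EuclideanSpace ℝ (Fin 3)) (r_in r_out α : ℝ)
    (hrin : 0 < r_in) (hr : r_in < r_out) (hα : 0 < α)
    (x : ℝ → EuclideanSpace ℝ (Fin 3)) (x' : ℝ → EuclideanSpace ℝ (Fin 3))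
    (hx : ∀ t : ℝ, HasDerivAt x (x' t) t) (hx' : Continuous x')
    (hne : ∀ t : ℝ, x t ≠ P)
    (hin : ∀ t : ℝ, 0 ≤ t →
      -α * (‖x t - P‖ - r_in) ≤ ⟪(‖x t - P‖⁻¹ • (x t - P)), x' t⟫)
    (hout : ∀ t : ℝ, 0 ≤ t →
      -α * (r_out - ‖x t - P‖) ≤ -⟪(‖x t - P‖⁻¹ • (x t - P)), x' t⟫)
    (h0 : r_in ≤ ‖x 0 - P‖ ∧ ‖x 0 - P‖ ≤ r_out) :
    ∀ t : ℝ, 0 ≤ t → r_in ≤ ‖x t - P‖ ∧ ‖x t - P‖ ≤ r_out :=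
  stmt_15_general P r_in r_out α x x' hx hne hin hout h0
end
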